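/- For every k ≥ 1, the series Σ_{h=1}^∞ π_{k+h} φ^{(h)}_{k1} converges absolutely and the k-th partial autocorrelation satisfies φ_{kk} = π_k + Σ_{h=1}^∞ π_{k+h} φ^{(h)}_{k1}. -/

import Mathlib

open scoped RealInnerProductSpace
open Filter

/-- The closed linear span `H_I` of `{X t : t ∈ I}` in a real Hilbert space. -/
noncomputable def hSpan {H : Type*} [NormedAddCommGroup H] [InnerProductSpace ℝ H]
    (X : ℤ → H) (I : Set ℤ) : Submodule ℝ H :=
  (Submodule.span ℝ (X '' I)).topologicalClosure

/-- The orthogonal projection `P_I v` of `v` onto the closed span `H_I`. -/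
noncomputable def projSpan {H : Type*} [NormedAddCommGroup H] [InnerProductSpace ℝ H]
    [CompleteSpace H] (X : ℤ → H) (I : Set ℤ) (v : H) : H :=
  haveI : CompleteSpace (hSpan X I) :=
    (Submodule.isClosed_topologicalClosure _).completeSpace_coe
  ((hSpan X I).orthogonalProjectionOnto v : H)

/-- The innovation `ε_t = X_t - ∑_{i ≥ 1} π_i X_{t-i}` of the AR(∞) representation. -/
noncomputable def arEps {H : Type*} [NormedAddCommGroup H] [InnerProductSpace ℝ H]
    (X : ℤ → H) (π : ℕ → ℝ) (t : ℤ) : H :=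
  X t - ∑' i : ℕ, π (i + 1) • X (t - (i + 1 : ℕ))

set_option linter.unusedSectionVars false
set_option maxHeartbeats 1000000

section helpers
variable {H : Type*} [NormedAddCommGroup H] [InnerProductSpace ℝ H] [CompleteSpace H]
  (X : ℤ → H) (I : Set ℤ)

lemma X_mem_hSpan {s : ℤ} (hs : s ∈ I) : X s ∈ hSpan X I :=
  Submodule.le_topologicalClosure _ (Submodule.subset_span ⟨s, hs, rfl⟩)

lemma mem_orthogonal_hSpan {v : H} (hv : ∀ s ∈ I, ⟪X s, v⟫ = 0) : v ∈ (hSpan X I)ᗮ := by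
  have h1 : Submodule.span ℝ (X '' I) ≤ (ℝ ∙ v)ᗮ := by
    rw [Submodule.span_le]
    rintro _ ⟨s, hs, rfl⟩
    rw [SetLike.mem_coe, Submodule.mem_orthogonal]
    intro u hu
    rcases Submodule.mem_span_singleton.1 hu with ⟨a, rfl⟩
    rw [real_inner_smul_left, real_inner_comm, hv s hs, mul_zero]
  have h2 : hSpan X I ≤ (ℝ ∙ v)ᗮ :=
    Submodule.topologicalClosure_minimal _ h1 (Submodule.isClosed_orthogonal _)
  rw [Submodule.mem_orthogonal]
  intro u hu
  have := (Submodule.mem_orthogonal _ _).1 (h2 hu) v (Submodule.mem_span_singleton_self v)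
  rwa [real_inner_comm] at this

lemma projSpan_eq_of {v w : H} (hw : w ∈ Submodule.span ℝ (X '' I))
    (ho : ∀ s ∈ I, ⟪X s, v - w⟫ = 0) : projSpan X I v = w := by
  haveI : CompleteSpace (hSpan X I) :=
    (Submodule.isClosed_topologicalClosure _).completeSpace_coe
  exact Submodule.eq_starProjection_of_mem_orthogonal
    (Submodule.le_topologicalClosure _ hw) (mem_orthogonal_hSpan X I ho)

lemma inner_sub_projSpan (v : H) {s : ℤ} (hs : s ∈ I) : ⟪X s, v - projSpan X I v⟫ = 0 := by
  haveI : CompleteSpace (hSpan X I) :=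
    (Submodule.isClosed_topologicalClosure _).completeSpace_coe
  exact (Submodule.mem_orthogonal _ _).1
    (Submodule.sub_starProjection_mem_orthogonal (K := hSpan X I) v) (X s) (X_mem_hSpan X I hs)

end helpers

/-- For every `k ≥ 1`, the series `Σ_{h≥1} π_{k+h} φ^{(h)}_{k1}` converges absolutely and the
k-th partial autocorrelation satisfies `φ_{kk} = π_k + Σ_{h≥1} π_{k+h} φ^{(h)}_{k1}`
(here `φ_{kj} = φ^{(1)}_{kj}`). -/
theorem pacf_eq_pi_add_series
    {H : Type*} [NormedAddCommGroup H] [InnerProductSpace ℝ H] [CompleteSpace H]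
    (X : ℤ → H) (γ : ℤ → ℝ) (π : ℕ → ℝ) (σε2 : ℝ)
    (hstat : ∀ s t : ℤ, ⟪X s, X t⟫ = γ (t - s))
    (hπ : Summable fun i : ℕ => |π i|)
    (heps_orth : ∀ t s : ℤ, s ≤ t - 1 → ⟪arEps X π t, X s⟫ = 0)
    (heps_var : ∀ t : ℤ, ‖arEps X π t‖ ^ 2 = σε2)
    (hσε : 0 < σε2)
    (φh : ℕ → ℕ → ℕ → ℝ)
    (hφh : ∀ h k : ℕ, 1 ≤ h → 1 ≤ k → ∀ t : ℤ,
      projSpan X (Set.Icc (t - k) (t - 1)) (X (t + h - 1))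
        = ∑ j ∈ Finset.Icc 1 k, φh h k j • X (t - j)) :
    ∀ k : ℕ, 1 ≤ k →
      Summable (fun h : ℕ => |π (k + h + 1) * φh (h + 1) k 1|) ∧
      φh 1 k k = π k + ∑' h : ℕ, π (k + h + 1) * φh (h + 1) k 1 := by
  intro k hk
  -- basic facts
  set B : ℝ := ‖X 0‖ with hBdef
  have hXnorm : ∀ t : ℤ, ‖X t‖ = B := by
    intro t
    have h1 : ‖X t‖ ^ 2 = γ 0 := by rw [← real_inner_self_eq_norm_sq, hstat t t, sub_self]
    have h2 : ‖X 0‖ ^ 2 = γ 0 := by rw [← real_inner_self_eq_norm_sq, hstat 0 0, sub_self]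
    have h3 := h1.trans h2.symm
    have := norm_nonneg (X t); have := norm_nonneg (X 0)
    nlinarith
  have hγsymm : ∀ n : ℤ, γ (-n) = γ n := by
    intro n
    have h1 := hstat n 0
    have h2 := hstat 0 n
    rw [real_inner_comm] at h1
    rw [zero_sub] at h1
    rw [sub_zero] at h2
    rw [← h1, h2]
  have hsumX : ∀ t : ℤ, Summable (fun i : ℕ => π (i + 1) • X (t - (i + 1 : ℕ))) := by
    intro t
    apply Summable.of_norm
    have he : (fun i : ℕ => ‖π (i + 1) • X (t - (i + 1 : ℕ))‖)
        = fun i : ℕ => |π (i + 1)| * B := by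
      funext i; rw [norm_smul, Real.norm_eq_abs, hXnorm]
    rw [he]
    exact ((summable_nat_add_iff 1).2 hπ).mul_right B
  have hdecomp : ∀ t : ℤ, X t = arEps X π t + ∑' i : ℕ, π (i + 1) • X (t - (i + 1 : ℕ)) := by
    intro t; rw [arEps, sub_add_cancel]
  have hinner_eps : ∀ t : ℤ, ⟪arEps X π t, X t⟫ = σε2 := by
    intro t
    rw [hdecomp t, inner_add_right]
    have h1 : ⟪arEps X π t, arEps X π t⟫ = σε2 := by
      rw [real_inner_self_eq_norm_sq, heps_var]
    have h2 : ⟪arEps X π t, ∑' i : ℕ, π (i + 1) • X (t - (i + 1 : ℕ))⟫ = 0 := by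
      have := (innerSL ℝ (arEps X π t)).map_tsum (hsumX t)
      rw [show ((innerSL ℝ (arEps X π t)) (∑' i : ℕ, π (i + 1) • X (t - (i + 1 : ℕ))))
        = ⟪arEps X π t, ∑' i : ℕ, π (i + 1) • X (t - (i + 1 : ℕ))⟫ from rfl] at this
      rw [this]
      have : ∀ i : ℕ, (innerSL ℝ (arEps X π t)) (π (i + 1) • X (t - (i + 1 : ℕ))) = 0 := by
        intro i
        have : ⟪arEps X π t, X (t - (i + 1 : ℕ))⟫ = 0 := by
          apply heps_orth
          have : (1 : ℤ) ≤ ((i + 1 : ℕ) : ℤ) := by exact_mod_cast Nat.one_le_iff_ne_zero.2 (by omega)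
          omega
        simp only [innerSL_apply_apply, real_inner_smul_right, this, mul_zero]
      simp only [this, tsum_zero]
    rw [h1, h2, add_zero]
  -- the embedded projection as a continuous linear map
  set S : Set ℤ := Set.Icc (-(k : ℤ)) (-1) with hSdef
  haveI : CompleteSpace (hSpan X S) :=
    (Submodule.isClosed_topologicalClosure _).completeSpace_coe
  set T : H →L[ℝ] H := (hSpan X S).subtypeL.comp (Submodule.orthogonalProjectionOnto (hSpan X S)) with hTdef
  have hT : ∀ v : H, projSpan X S v = T v := fun v => rfl
  have hTnorm : ∀ v : H, ‖projSpan X S v‖ ≤ ‖v‖ := by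
    intro v
    rw [hT]
    calc ‖T v‖ = ‖Submodule.orthogonalProjectionOnto (hSpan X S) v‖ := rfl
      _ ≤ 1 * ‖v‖ :=
        (Submodule.orthogonalProjectionOnto (hSpan X S)).le_of_opNorm_le (Submodule.orthogonalProjectionOnto_norm_le _) v
      _ = ‖v‖ := one_mul _
  -- instantiating hφh at t = 0
  have hφ0 : ∀ h : ℕ, 1 ≤ h →
      projSpan X S (X ((h : ℤ) - 1)) = ∑ j ∈ Finset.Icc 1 k, φh h k j • X (-(j : ℤ)) := by
    intro h hh
    have := hφh h k hh hk 0
    simp only [zero_sub, zero_add] at this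
    exact this
  have hGram : ∀ h i : ℕ, 1 ≤ h → i ∈ Finset.Icc 1 k →
      γ ((h : ℤ) - 1 + i) = ∑ j ∈ Finset.Icc 1 k, φh h k j * γ ((i : ℤ) - j) := by
    intro h i hh hi
    rw [Finset.mem_Icc] at hi
    have hiS : -(i : ℤ) ∈ S := by
      rw [hSdef, Set.mem_Icc]
      have h1 : (1:ℤ) ≤ (i:ℤ) := by exact_mod_cast hi.1
      have h2 : (i:ℤ) ≤ (k:ℤ) := by exact_mod_cast hi.2
      omega
    have horth := inner_sub_projSpan X S (X ((h:ℤ) - 1)) hiS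
    rw [hφ0 h hh, inner_sub_right, inner_sum] at horth
    simp only [real_inner_smul_right] at horth
    rw [sub_eq_zero] at horth
    have e1 : ⟪X (-(i:ℤ)), X ((h:ℤ)-1)⟫ = γ ((h:ℤ)-1+i) := by
      rw [hstat]; congr 1; ring
    rw [e1] at horth
    rw [horth]
    apply Finset.sum_congr rfl
    intro j hj
    congr 1
    rw [hstat]
    congr 1; ring
  have hback : ∀ h : ℕ, 1 ≤ h →
      projSpan X S (X (-(k : ℤ) - h)) = ∑ j ∈ Finset.Icc 1 k, φh h k j • X (-(k:ℤ) - 1 + j) := by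
    intro h hh
    apply projSpan_eq_of
    · apply Submodule.sum_mem
      intro j hj
      rw [Finset.mem_Icc] at hj
      apply Submodule.smul_mem
      apply Submodule.subset_span
      refine ⟨-(k:ℤ) - 1 + j, ?_, rfl⟩
      rw [hSdef, Set.mem_Icc]
      have h1 : (1:ℤ) ≤ (j:ℤ) := by exact_mod_cast hj.1
      have h2 : (j:ℤ) ≤ (k:ℤ) := by exact_mod_cast hj.2
      omega
    · intro s hs
      rw [hSdef, Set.mem_Icc] at hs
      obtain ⟨i, hi1, hik, hsi⟩ : ∃ i : ℕ, 1 ≤ i ∧ i ≤ k ∧ s = -(k:ℤ) - 1 + i := by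
        refine ⟨(s + k + 1).toNat, by omega, by omega, by omega⟩
      subst hsi
      rw [inner_sub_right, inner_sum]
      simp only [real_inner_smul_right]
      rw [sub_eq_zero]
      have e1 : ⟪X (-(k:ℤ)-1+(i:ℤ)), X (-(k:ℤ) - (h:ℤ))⟫ = γ (-((h:ℤ)-1+i)) := by
        rw [hstat]; congr 1; ring
      rw [e1, hγsymm, hGram h i hh (Finset.mem_Icc.2 ⟨hi1, hik⟩)]
      apply Finset.sum_congr rfl
      intro j hj
      congr 1
      rw [hstat]
      rw [show (-(k:ℤ)-1+(j:ℤ)) - (-(k:ℤ)-1+(i:ℤ)) = -((i:ℤ) - j) from by ring, hγsymm]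
  have hid : ∀ m : ℕ, 1 ≤ m → m ≤ k → projSpan X S (X (-(m:ℤ))) = X (-(m:ℤ)) := by
    intro m h1 h2
    apply projSpan_eq_of
    · apply Submodule.subset_span
      refine ⟨-(m:ℤ), ?_, rfl⟩
      rw [hSdef, Set.mem_Icc]
      have g1 : (1:ℤ) ≤ (m:ℤ) := by exact_mod_cast h1
      have g2 : (m:ℤ) ≤ (k:ℤ) := by exact_mod_cast h2
      omega
    · intro s hs
      rw [sub_self, inner_zero_right]
  have hPeps : projSpan X S (arEps X π 0) = 0 := by
    apply projSpan_eq_of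
    · exact Submodule.zero_mem _
    · intro s hs
      rw [hSdef, Set.mem_Icc] at hs
      rw [sub_zero, real_inner_comm]
      exact heps_orth 0 s (by omega)
  -- the dual vector d
  set S' : Set ℤ := Set.Icc (-(k:ℤ) + 1) (-1) with hS'def
  set F : Submodule ℝ H := Submodule.span ℝ (X '' S') with hFdef
  haveI : FiniteDimensional ℝ F :=
    FiniteDimensional.span_of_finite ℝ ((Set.finite_Icc _ _).image X)
  set d : H := X (-(k:ℤ)) - (Submodule.orthogonalProjectionOnto F (X (-(k:ℤ))) : H) with hddef
  have hdF : d ∈ Fᗮ := Submodule.sub_starProjection_mem_orthogonal _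
  have hdpair : ∀ j : ℕ, 1 ≤ j → j ≤ k → ⟪d, X (-(j:ℤ))⟫ = if j = k then ‖d‖^2 else 0 := by
    intro j h1 h2
    by_cases hj : j = k
    · subst hj
      rw [if_pos rfl]
      have hXk : X (-(j:ℤ)) = d + (Submodule.orthogonalProjectionOnto F (X (-(j:ℤ))) : H) := by
        rw [hddef, sub_add_cancel]
      rw [hXk, inner_add_right, real_inner_self_eq_norm_sq]
      have hz : ⟪d, (Submodule.orthogonalProjectionOnto F (X (-(j:ℤ))) : H)⟫ = 0 := by
        rw [real_inner_comm]
        exact hdF _ (SetLike.coe_mem _)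
      rw [hz, add_zero]
    · rw [if_neg hj, real_inner_comm]
      apply hdF
      apply Submodule.subset_span
      refine ⟨-(j:ℤ), ?_, rfl⟩
      rw [hS'def, Set.mem_Icc]
      have g1 : (1:ℤ) ≤ (j:ℤ) := by exact_mod_cast h1
      have g2 : (j:ℤ) ≤ (k:ℤ) := by exact_mod_cast h2
      have g3 : (j:ℤ) ≠ (k:ℤ) := by exact_mod_cast hj
      omega
  have hdne : d ≠ 0 := by
    intro hd
    have hXkF : X (-(k:ℤ)) ∈ F := by
      have h0 : X (-(k:ℤ)) - (Submodule.orthogonalProjectionOnto F (X (-(k:ℤ))) : H) = 0 := by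
        rw [← hddef]; exact hd
      rw [sub_eq_zero.mp h0]
      exact SetLike.coe_mem _
    rw [hFdef] at hXkF
    rcases (Finsupp.mem_span_image_iff_linearCombination ℝ).1 hXkF with ⟨l, hlsupp, hlsum⟩
    rw [Finsupp.linearCombination_apply] at hlsum
    by_cases hl : l = 0
    · have h0 : X (-(k:ℤ)) = 0 := by rw [← hlsum, hl, Finsupp.sum_zero_index]
      have hh := hinner_eps (-(k:ℤ))
      rw [h0, inner_zero_right] at hh
      exact absurd hh.symm (ne_of_gt hσε)
    · have hne : l.support.Nonempty := Finsupp.support_nonempty_iff.2 hl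
      set m : ℤ := l.support.max' hne with hmdef
      have hmsupp := l.support.max'_mem hne
      have hmS' : m ∈ S' := hlsupp hmsupp
      have key : ⟪arEps X π m, X (-(k:ℤ))⟫ = 0 := by
        apply heps_orth
        rw [hS'def, Set.mem_Icc] at hmS'
        omega
      rw [← hlsum, Finsupp.sum, inner_sum] at key
      have hterm : ∀ s ∈ l.support, ⟪arEps X π m, l s • X s⟫ = if s = m then l m * σε2 else 0 := by
        intro s hs
        by_cases hsm : s = m
        · subst hsm; rw [if_pos rfl, real_inner_smul_right, hinner_eps]
        · rw [if_neg hsm, real_inner_smul_right]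
          have hle : s ≤ m - 1 := by
            have := Finset.le_max' _ s hs
            omega
          rw [heps_orth m s hle, mul_zero]
      rw [Finset.sum_congr rfl hterm, Finset.sum_ite_eq' l.support m, if_pos hmsupp] at key
      have hlm : l m ≠ 0 := (Finsupp.mem_support_iff).1 hmsupp
      rcases mul_eq_zero.1 key with h | h
      · exact hlm h
      · exact (ne_of_gt hσε) h
  set D : ℝ := ‖d‖ ^ 2 with hDdef
  have hD : 0 < D := by rw [hDdef]; exact pow_pos (norm_pos_iff.mpr hdne) 2
  -- master equation
  have hmaster : ∑ j ∈ Finset.Icc 1 k, φh 1 k j • X (-(j:ℤ))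
      = ∑' i : ℕ, π (i + 1) • projSpan X S (X ((0:ℤ) - (i + 1 : ℕ))) := by
    have h1 : projSpan X S (X 0) = ∑ j ∈ Finset.Icc 1 k, φh 1 k j • X (-(j : ℤ)) := by
      have := hφ0 1 le_rfl
      norm_num at this
      exact this
    have h2 : projSpan X S (X 0)
        = ∑' i : ℕ, π (i + 1) • projSpan X S (X ((0:ℤ) - (i + 1 : ℕ))) := by
      conv_lhs => rw [hdecomp 0]
      rw [hT, map_add, ContinuousLinearMap.map_tsum T (hsumX 0), ← hT, hPeps, zero_add]
      exact tsum_congr fun i => by rw [map_smul, ← hT]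
    rw [← h1, h2]
  have hg : Summable (fun i : ℕ => π (i + 1) • projSpan X S (X ((0:ℤ) - (i + 1 : ℕ)))) := by
    have h := T.summable (hsumX 0)
    refine h.congr fun i => ?_
    rw [map_smul, ← hT]
  have hpair := (innerSL ℝ d).map_tsum hg
  have hcsum : Summable (fun i : ℕ => π (i + 1) * ⟪d, projSpan X S (X ((0:ℤ) - (i + 1 : ℕ)))⟫) := by
    have h := (innerSL ℝ d).summable hg
    refine h.congr fun i => ?_
    simp only [innerSL_apply_apply, real_inner_smul_right]
  have hL : ⟪d, ∑ j ∈ Finset.Icc 1 k, φh 1 k j • X (-(j:ℤ))⟫ = φh 1 k k * D := by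
    rw [inner_sum]
    have hterm : ∀ j ∈ Finset.Icc 1 k, ⟪d, φh 1 k j • X (-(j:ℤ))⟫
        = if j = k then φh 1 k j * D else 0 := by
      intro j hj
      rw [Finset.mem_Icc] at hj
      rw [real_inner_smul_right, hdpair j hj.1 hj.2]
      by_cases h : j = k
      · rw [if_pos h, if_pos h]
      · rw [if_neg h, if_neg h, mul_zero]
    rw [Finset.sum_congr rfl hterm, Finset.sum_ite_eq' (Finset.Icc 1 k) k,
      if_pos (Finset.mem_Icc.2 ⟨hk, le_rfl⟩)]
  have hscalar : φh 1 k k * D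
      = ∑' i : ℕ, π (i + 1) * ⟪d, projSpan X S (X ((0:ℤ) - (i + 1 : ℕ)))⟫ := by
    calc φh 1 k k * D = ⟪d, ∑ j ∈ Finset.Icc 1 k, φh 1 k j • X (-(j:ℤ))⟫ := hL.symm
      _ = ⟪d, ∑' i : ℕ, π (i + 1) • projSpan X S (X ((0:ℤ) - (i + 1 : ℕ)))⟫ := by rw [hmaster]
      _ = ∑' i : ℕ, π (i + 1) * ⟪d, projSpan X S (X ((0:ℤ) - (i + 1 : ℕ)))⟫ := by
          rw [show ⟪d, ∑' i : ℕ, π (i + 1) • projSpan X S (X ((0:ℤ) - (i + 1 : ℕ)))⟫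
            = (innerSL ℝ d) (∑' i : ℕ, π (i + 1) • projSpan X S (X ((0:ℤ) - (i + 1 : ℕ)))) from rfl,
            hpair]
          exact tsum_congr fun i => by simp only [innerSL_apply_apply, real_inner_smul_right]
  -- evaluation of the inner products
  have hinner_back : ∀ h : ℕ, 1 ≤ h →
      ⟪d, projSpan X S (X (-(k:ℤ) - (h:ℤ)))⟫ = φh h k 1 * D := by
    intro h hh
    rw [hback h hh, inner_sum]
    have hterm : ∀ j ∈ Finset.Icc 1 k, ⟪d, φh h k j • X (-(k:ℤ) - 1 + j)⟫
        = if j = 1 then φh h k j * D else 0 := by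
      intro j hj
      rw [Finset.mem_Icc] at hj
      rw [real_inner_smul_right]
      have hidx : (-(k:ℤ) - 1 + (j:ℤ)) = -(((k + 1 - j : ℕ)):ℤ) := by omega
      rw [hidx, hdpair (k + 1 - j) (by omega) (by omega)]
      by_cases hj1 : j = 1
      · rw [if_pos hj1, if_pos (show k + 1 - j = k by omega)]
      · rw [if_neg hj1, if_neg (show ¬(k + 1 - j = k) by omega), mul_zero]
    rw [Finset.sum_congr rfl hterm, Finset.sum_ite_eq' (Finset.Icc 1 k) 1,
      if_pos (Finset.mem_Icc.2 ⟨le_rfl, hk⟩)]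
  have hval_small : ∀ i : ℕ, i < k →
      π (i + 1) * ⟪d, projSpan X S (X ((0:ℤ) - (i + 1 : ℕ)))⟫
      = if i + 1 = k then π (i + 1) * D else 0 := by
    intro i hi
    have hcast : ((0:ℤ) - ((i + 1 : ℕ):ℤ)) = -((i + 1 : ℕ):ℤ) := by rw [zero_sub]
    rw [hcast, hid (i + 1) (by omega) (by omega), hdpair (i + 1) (by omega) (by omega)]
    by_cases h : i + 1 = k
    · rw [if_pos h, if_pos h]
    · rw [if_neg h, if_neg h, mul_zero]
  have hval_big : ∀ i : ℕ,
      π (i + k + 1) * ⟪d, projSpan X S (X ((0:ℤ) - ((i + k) + 1 : ℕ)))⟫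
      = (π (k + i + 1) * φh (i + 1) k 1) * D := by
    intro i
    have hcast : ((0:ℤ) - (((i + k) + 1 : ℕ):ℤ)) = -(k:ℤ) - ((i + 1 : ℕ):ℤ) := by omega
    rw [hcast]
    rw [show ((i + 1 : ℕ):ℤ) = ((i + 1 : ℕ):ℤ) from rfl]
    rw [hinner_back (i + 1) (by omega)]
    rw [show i + k + 1 = k + i + 1 from by omega]
    ring
  -- split the tsum
  have hsplit := Summable.sum_add_tsum_nat_add
    (f := fun i : ℕ => π (i + 1) * ⟪d, projSpan X S (X ((0:ℤ) - (i + 1 : ℕ)))⟫) k hcsum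
  have hhead : ∑ i ∈ Finset.range k,
      π (i + 1) * ⟪d, projSpan X S (X ((0:ℤ) - (i + 1 : ℕ)))⟫ = π k * D := by
    have hterm : ∀ i ∈ Finset.range k, π (i + 1) * ⟪d, projSpan X S (X ((0:ℤ) - (i + 1 : ℕ)))⟫
        = if i = k - 1 then π k * D else 0 := by
      intro i hi
      rw [Finset.mem_range] at hi
      rw [hval_small i hi]
      by_cases h : i = k - 1
      · rw [if_pos (show i + 1 = k by omega), if_pos h, show i + 1 = k from by omega]
      · rw [if_neg (show ¬(i + 1 = k) by omega), if_neg h]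
    rw [Finset.sum_congr rfl hterm, Finset.sum_ite_eq' (Finset.range k) (k - 1),
      if_pos (Finset.mem_range.2 (by omega))]
  have htailsum : ∑' i : ℕ, π ((i + k) + 1) * ⟪d, projSpan X S (X ((0:ℤ) - ((i + k) + 1 : ℕ)))⟫
      = (∑' i : ℕ, π (k + i + 1) * φh (i + 1) k 1) * D := by
    rw [← tsum_mul_right]
    exact tsum_congr hval_big
  -- bound on the backward coefficients
  have hφbound : ∀ h : ℕ, 1 ≤ h → |φh h k 1| ≤ ‖d‖ * B / D := by
    intro h hh
    rw [le_div_iff₀ hD]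
    have h1 : |φh h k 1 * D| ≤ ‖d‖ * B := by
      rw [← hinner_back h hh]
      calc |⟪d, projSpan X S (X (-(k:ℤ) - (h:ℤ)))⟫|
          ≤ ‖d‖ * ‖projSpan X S (X (-(k:ℤ) - (h:ℤ)))‖ := abs_real_inner_le_norm _ _
        _ ≤ ‖d‖ * ‖X (-(k:ℤ) - (h:ℤ))‖ :=
            mul_le_mul_of_nonneg_left (hTnorm _) (norm_nonneg d)
        _ = ‖d‖ * B := by rw [hXnorm]
    calc |φh h k 1| * D = |φh h k 1 * D| := by rw [abs_mul, abs_of_pos hD]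
      _ ≤ ‖d‖ * B := h1
  have hsum1 : Summable (fun h : ℕ => |π (k + h + 1) * φh (h + 1) k 1|) := by
    have h0 : Summable (fun h : ℕ => |π (h + (k + 1))|) := (summable_nat_add_iff (k + 1)).2 hπ
    have h1 : Summable (fun h : ℕ => |π (k + h + 1)|) := by
      refine h0.congr fun h => ?_
      rw [show h + (k + 1) = k + h + 1 from by omega]
    have hmaj : Summable (fun h : ℕ => |π (k + h + 1)| * (‖d‖ * B / D)) := h1.mul_right _
    apply Summable.of_nonneg_of_le (fun h => abs_nonneg _) (fun h => ?_) hmaj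
    rw [abs_mul]
    exact mul_le_mul_of_nonneg_left (hφbound (h + 1) (by omega)) (abs_nonneg _)
  refine ⟨hsum1, ?_⟩
  have hfinal : φh 1 k k * D = (π k + ∑' i : ℕ, π (k + i + 1) * φh (i + 1) k 1) * D := by
    rw [hscalar, ← hsplit, hhead, htailsum]
    ring
  exact mul_right_cancel₀ (ne_of_gt hD) hfinal
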